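/- For every n ≥ 1, the set of extreme points (vertices) of the permutohedron Π_{n−1} is exactly the set {v_σ : σ a permutation of {1,…,n}}. -/

import Mathlib

/-!
By the equality case of the rearrangement inequality, `v_σ` is the unique maximiser of the
linear functional `x ↦ v_σ ⬝ᵥ x` among the points `v_τ`. A point of `S` at which some linear
functional is strictly larger than on the rest of `S` is an extreme point of `convexHull S`,
because `convexHull S` stays inside the convex set `{x} ∪ {y | ℓ y < ℓ x}`.
-/

/-- The vertex `v_σ` of the permutohedron: its `i`-th coordinate is `σ⁻¹(i)`
(with values in `{1, …, n}`). -/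
noncomputable def permuVertex (n : ℕ) (σ : Equiv.Perm (Fin n)) : Fin n → ℝ :=
  fun i => ((σ⁻¹ i : ℕ) : ℝ) + 1

/-- The `(n-1)`-dimensional permutohedron `Π_{n-1} ⊆ ℝ^n`: the convex hull
of the `n!` points `v_σ`. -/
noncomputable def permutohedron (n : ℕ) : Set (Fin n → ℝ) :=
  convexHull ℝ (Set.range (permuVertex n))

open Equiv

theorem StrictMono.eq_one_of_monovary_comp_perm {α β : Type*} [LinearOrder α] [Finite α]
    [LinearOrder β] {g : α → β} (hg : StrictMono g) {π : Perm α} (h : Monovary g (g ∘ π)) :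
    π = 1 := by
  have hπ : StrictMono π := by
    intro i j hij
    by_contra! hji
    have hlt : π j < π i := hji.lt_of_ne (π.injective.ne hij.ne')
    exact (h (hg hlt)).not_gt (hg hij)
  exact Equiv.ext fun i ↦ hπ.apply_eq

theorem StrictMono.sum_mul_comp_perm_lt_sum_mul_self {α R : Type*} [LinearOrder α] [Fintype α]
    [CommRing R] [LinearOrder R] [IsStrictOrderedRing R] {g : α → R} (hg : StrictMono g)
    {π : Perm α} (hπ : π ≠ 1) : ∑ i, g i * g (π i) < ∑ i, g i * g i :=
  (monovary_self g).sum_mul_comp_perm_lt_sum_mul_iff.2 fun h ↦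
    hπ (hg.eq_one_of_monovary_comp_perm h)

theorem convex_insert_setOf_lt {𝕜 E : Type*} [Field 𝕜] [LinearOrder 𝕜] [IsStrictOrderedRing 𝕜]
    [AddCommGroup E] [Module 𝕜 E] (ℓ : E →ₗ[𝕜] 𝕜) (x : E) :
    Convex 𝕜 (insert x {y | ℓ y < ℓ x}) := by
  have hle : ∀ y ∈ insert x {y | ℓ y < ℓ x}, ℓ y ≤ ℓ x := by
    rintro y (rfl | hy)
    exacts [le_rfl, le_of_lt hy]
  rw [convex_iff_openSegment_subset]
  rintro y hy z hz _ ⟨a, b, ha, hb, hab, rfl⟩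
  by_cases hyz : y = x ∧ z = x
  · rw [hyz.1, hyz.2]
    exact Or.inl (Convex.combo_self hab x)
  right
  have key : a * ℓ y + b * ℓ z < a * ℓ x + b * ℓ x := by
    rcases not_and_or.1 hyz with hy' | hz'
    · exact add_lt_add_of_lt_of_le (mul_lt_mul_of_pos_left (hy.resolve_left hy') ha)
        (mul_le_mul_of_nonneg_left (hle z hz) hb.le)
    · exact add_lt_add_of_le_of_lt (mul_le_mul_of_nonneg_left (hle y hy) ha.le)
        (mul_lt_mul_of_pos_left (hz.resolve_left hz') hb)
  simpa [← add_mul, hab] using key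

theorem mem_extremePoints_convexHull_of_forall_lt {𝕜 E : Type*} [Field 𝕜] [LinearOrder 𝕜]
    [IsStrictOrderedRing 𝕜] [AddCommGroup E] [Module 𝕜 E] {S : Set E} {x : E} (hx : x ∈ S)
    (ℓ : E →ₗ[𝕜] 𝕜) (h : ∀ y ∈ S, y ≠ x → ℓ y < ℓ x) :
    x ∈ (convexHull 𝕜 S).extremePoints 𝕜 := by
  have hsub : convexHull 𝕜 S ⊆ insert x {y | ℓ y < ℓ x} :=
    convexHull_min (fun y hy ↦ (eq_or_ne y x).imp id (h y hy)) (convex_insert_setOf_lt ℓ x)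
  have hsdiff : convexHull 𝕜 S \ {x} = convexHull 𝕜 S ∩ {y | ℓ y < ℓ x} := by
    ext y
    constructor
    · rintro ⟨hy, hyx⟩
      exact ⟨hy, (hsub hy).resolve_left hyx⟩
    · rintro ⟨hy, hlt⟩
      exact ⟨hy, fun hyx ↦ hlt.ne (congrArg ℓ hyx)⟩
  rw [(convex_convexHull 𝕜 S).mem_extremePoints_iff_convex_sdiff, hsdiff]
  exact ⟨subset_convexHull 𝕜 S hx,
    (convex_convexHull 𝕜 S).inter (convex_halfSpace_lt ℓ.isLinear _)⟩

theorem permuVertex_dotProduct_lt {n : ℕ} {σ τ : Perm (Fin n)} (h : τ ≠ σ) :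
    permuVertex n σ ⬝ᵥ permuVertex n τ < permuVertex n σ ⬝ᵥ permuVertex n σ := by
  have hg : StrictMono (fun k : Fin n ↦ (k : ℝ) + 1) := fun a b hab ↦ by simpa using hab
  have hπ : τ⁻¹ * σ ≠ 1 := by rwa [Ne, inv_mul_eq_one]
  have key := hg.sum_mul_comp_perm_lt_sum_mul_self hπ
  -- reindexing by `i = σ k` turns `v_σ` into `k ↦ k + 1` and `v_τ` into `k ↦ (τ⁻¹ * σ) k + 1`
  simp only [dotProduct]
  rw [← Equiv.sum_comp σ, ← Equiv.sum_comp σ (fun i ↦ permuVertex n σ i * permuVertex n σ i)]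
  simpa [permuVertex] using key

theorem statement2 (n : ℕ) :
    Set.extremePoints ℝ (permutohedron n) = Set.range (permuVertex n) := by
  refine extremePoints_convexHull_subset.antisymm ?_
  rintro _ ⟨σ, rfl⟩
  refine mem_extremePoints_convexHull_of_forall_lt (Set.mem_range_self σ)
    (dotProductBilin ℝ ℝ (permuVertex n σ)) ?_
  rintro _ ⟨τ, rfl⟩ hne
  exact permuVertex_dotProduct_lt (fun h ↦ hne (congrArg _ h))
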